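/- arXiv:2506.08150 — 6 statements merged into one kernel-verified Lean document; each statement's English description precedes it below -/
import Mathlib

section
/- Let Δ_{λ,ν} be the logic program consisting of the fact t_{0,0} together with rules (⋁_{d<d'≤ν} t_{k+1,d'} ← t_{k,d}) for all 0 ≤ k < λ−1 and 0 ≤ d ≤ ν. If ⟨T,T⟩ is an equilibrium model of Δ_{λ,ν}, then ⟨T,T⟩ is timed wrt λ, i.e., there exists a timing function τ:[0,λ)→ℕ with τ(0)=0 and τ strictly increasing, such that for all 0 ≤ k < λ and d ∈ ℕ: t_{k,d} ∈ T iff τ(k)=d. -/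
/-! ### Propositional Here-and-There -/

inductive HTForm (α : Type) : Type
  | bot : HTForm α
  | atom : α → HTForm α
  | and : HTForm α → HTForm α → HTForm α
  | or : HTForm α → HTForm α → HTForm α
  | imp : HTForm α → HTForm α → HTForm α

/-- HT satisfaction `⟨H,T⟩ ⊨ φ`. -/
def HTSat {α : Type} : Set α → Set α → HTForm α → Prop
  | _, _, .bot => False
  | H, _, .atom a => a ∈ H
  | H, T, .and φ ψ => HTSat H T φ ∧ HTSat H T ψ
  | H, T, .or φ ψ => HTSat H T φ ∨ HTSat H T ψ
  | H, T, .imp φ ψ => (HTSat H T φ → HTSat H T ψ) ∧ (HTSat T T φ → HTSat T T ψ)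

/-- Classical satisfaction. -/
def ClSat {α : Type} : Set α → HTForm α → Prop
  | _, .bot => False
  | T, .atom a => a ∈ T
  | T, .and φ ψ => ClSat T φ ∧ ClSat T ψ
  | T, .or φ ψ => ClSat T φ ∨ ClSat T ψ
  | T, .imp φ ψ => ClSat T φ → ClSat T ψ

def HTModel {α : Type} (H T : Set α) (Γ : Set (HTForm α)) : Prop :=
  ∀ φ ∈ Γ, HTSat H T φ

/-- Equilibrium model: total HT-model minimal in the here-component. -/
def EqModel {α : Type} (T : Set α) (Γ : Set (HTForm α)) : Prop :=
  HTModel T T Γ ∧ ∀ H : Set α, H ⊆ T → HTModel H T Γ → H = T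

def hneg {α : Type} (φ : HTForm α) : HTForm α := .imp φ .bot
def hTop {α : Type} : HTForm α := hneg .bot
def hconj {α : Type} (l : List (HTForm α)) : HTForm α := l.foldr .and hTop
def hdisj {α : Type} (l : List (HTForm α)) : HTForm α := l.foldr .or .bot

/-! ### Timing functions -/

/-- A (strict) timing function wrt `lam`: `τ 0 = 0` and `τ` strictly increasing on `[0, lam)`. -/
def TimingFn (lam : ℕ) (τ : ℕ → ℕ) : Prop :=
  τ 0 = 0 ∧ ∀ k, k + 1 < lam → τ k < τ (k + 1)

/-! ### Metric formulas and MHT satisfaction -/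

inductive MForm (α : Type) : Type
  | bot : MForm α
  | atom : α → MForm α
  | and : MForm α → MForm α → MForm α
  | or : MForm α → MForm α → MForm α
  | imp : MForm α → MForm α → MForm α
  | init : MForm α
  | next : ℕ → Option ℕ → MForm α → MForm α
  | always : ℕ → Option ℕ → MForm α → MForm α
  | event : ℕ → Option ℕ → MForm α → MForm α

/-- Membership `d ∈ [m, n)` with `n ∈ ℕ ∪ {ω}` (`none` = ω). -/
def inI (m : ℕ) (n : Option ℕ) (d : ℕ) : Prop :=
  m ≤ d ∧ ∀ n', n = some n' → d < n'

/-- MHT satisfaction over a timed HT-trace of length `lam` given by `H T : ℕ → Set α` and `τ`. -/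
def MSat {α : Type} (lam : ℕ) : (ℕ → Set α) → (ℕ → Set α) → (ℕ → ℕ) → ℕ → MForm α → Prop
  | _, _, _, _, .bot => False
  | H, _, _, k, .atom a => a ∈ H k
  | H, T, τ, k, .and φ ψ => MSat lam H T τ k φ ∧ MSat lam H T τ k ψ
  | H, T, τ, k, .or φ ψ => MSat lam H T τ k φ ∨ MSat lam H T τ k ψ
  | H, T, τ, k, .imp φ ψ =>
      (MSat lam H T τ k φ → MSat lam H T τ k ψ) ∧
      (MSat lam T T τ k φ → MSat lam T T τ k ψ)
  | _, _, _, k, .init => k = 0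
  | H, T, τ, k, .next m n φ =>
      k + 1 < lam ∧ MSat lam H T τ (k + 1) φ ∧ inI m n (τ (k + 1) - τ k)
  | H, T, τ, k, .event m n φ =>
      ∃ i, k ≤ i ∧ i < lam ∧ inI m n (τ i - τ k) ∧ MSat lam H T τ i φ
  | H, T, τ, k, .always m n φ =>
      ∀ i, k ≤ i → i < lam → inI m n (τ i - τ k) → MSat lam H T τ i φ

def mneg {α : Type} (φ : MForm α) : MForm α := .imp φ .bot
def mTop {α : Type} : MForm α := mneg .bot
def mconj {α : Type} (l : List (MForm α)) : MForm α := l.foldr .and mTop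
def mdisj {α : Type} (l : List (MForm α)) : MForm α := l.foldr .or .bot

/-! ### The Boolean timing program Δ_{λ,ν} -/

/-- `bigOr`/`deltaRule`/`DeltaB` over atoms embedded via `f : ℕ × ℕ → β`
(`f (k,d)` plays the role of the atom `t_{k,d}`). -/
def deltaRule {β : Type} (f : ℕ × ℕ → β) (k d ν : ℕ) : HTForm β :=
  .imp (.atom (f (k, d)))
    (hdisj (((List.range (ν + 1)).filter (fun d' => decide (d < d'))).map
      (fun d' => .atom (f (k + 1, d')))))

def DeltaB {β : Type} (f : ℕ × ℕ → β) (lam ν : ℕ) : Set (HTForm β) :=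
  {HTForm.atom (f (0, 0))} ∪
  {r | ∃ k d, k + 1 < lam ∧ d ≤ ν ∧ r = deltaRule f k d ν}

/-- `⟨H,T⟩` is timed wrt `lam` with timing function `τ`:
`t_{k,d} ∈ H ↔ τ k = d` and `t_{k,d} ∈ T ↔ τ k = d` for all `k < lam`. -/
def TimedHT {β : Type} (f : ℕ × ℕ → β) (lam : ℕ) (H T : Set β) (τ : ℕ → ℕ) : Prop :=
  TimingFn lam τ ∧
  ∀ k, k < lam → ∀ d, ((f (k, d) ∈ H) ↔ τ k = d) ∧ ((f (k, d) ∈ T) ↔ τ k = d)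

/-! ### HT_c with difference constraints (simple signature) -/

abbrev CVal (V : Type) := V → Option ℕ

def CValLe {V : Type} (h t : CVal V) : Prop := ∀ x d, h x = some d → t x = some d

inductive CForm (V : Type) : Type
  | bot : CForm V
  | eqC : V → ℕ → CForm V
  | diff : V → V → ℤ → CForm V
  | and : CForm V → CForm V → CForm V
  | or : CForm V → CForm V → CForm V
  | imp : CForm V → CForm V → CForm V

def CSat {V : Type} : CVal V → CVal V → CForm V → Prop
  | _, _, .bot => False
  | h, _, .eqC x d => h x = some d
  | h, _, .diff x y d => ∃ a b : ℕ, h x = some a ∧ h y = some b ∧ (a : ℤ) - b ≤ d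
  | h, t, .and φ ψ => CSat h t φ ∧ CSat h t ψ
  | h, t, .or φ ψ => CSat h t φ ∨ CSat h t ψ
  | h, t, .imp φ ψ => (CSat h t φ → CSat h t ψ) ∧ (CSat t t φ → CSat t t ψ)

def CModel {V : Type} (h t : CVal V) (Γ : Set (CForm V)) : Prop := ∀ φ ∈ Γ, CSat h t φ

/-- Δ^c_λ over integer variables `t_0, …, t_{λ-1}` (variables are indices in ℕ). -/
def DeltaC (lam : ℕ) : Set (CForm ℕ) :=
  {CForm.eqC 0 0} ∪ {r | ∃ k, k + 1 < lam ∧ r = CForm.diff k (k + 1) (-1)}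

/-- `⟨h,t⟩` is timed wrt `lam`. -/
def TimedC (lam : ℕ) (h t : CVal ℕ) : Prop :=
  ∃ τ : ℕ → ℕ, TimingFn lam τ ∧ ∀ k, k < lam → h k = some (τ k) ∧ t k = some (τ k)

/-! ### Timed traces and the bijection θ/σ -/

abbrev TAtom (α : Type) := (α × ℕ) ⊕ (ℕ × ℕ)

/-- A trace candidate: here-states, there-states and a timing function. -/
abbrev TraceC (α : Type) := (ℕ → Set α) × (ℕ → Set α) × (ℕ → ℕ)

/-- Timed HT-trace of length `lam` (normalized beyond `lam`). -/
def IsTTrace {α : Type} (lam : ℕ) (M : TraceC α) : Prop :=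
  (∀ k, M.1 k ⊆ M.2.1 k) ∧ TimingFn lam M.2.2 ∧
  (∀ k, lam ≤ k → M.1 k = ∅ ∧ M.2.1 k = ∅ ∧ M.2.2 k = 0)

def thetaMap {α : Type} (lam : ℕ) (M : TraceC α) : Set (TAtom α) × Set (TAtom α) :=
  ({x | (∃ a k, k < lam ∧ a ∈ M.1 k ∧ x = Sum.inl (a, k)) ∨
        (∃ k, k < lam ∧ x = Sum.inr (k, M.2.2 k))},
   {x | (∃ a k, k < lam ∧ a ∈ M.2.1 k ∧ x = Sum.inl (a, k)) ∨
        (∃ k, k < lam ∧ x = Sum.inr (k, M.2.2 k))})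

/-- HT-interpretations over `A* ∪ T` timed wrt `lam`. -/
def TimedInterp (α : Type) (lam : ℕ) : Set (Set (TAtom α) × Set (TAtom α)) :=
  {p | p.1 ⊆ p.2 ∧ (∀ a k, Sum.inl (a, k) ∈ p.2 → k < lam) ∧
    ∃ τ : ℕ → ℕ, TimingFn lam τ ∧
      ∀ k d, (Sum.inr (k, d) ∈ p.1 ↔ (k < lam ∧ τ k = d)) ∧
             (Sum.inr (k, d) ∈ p.2 ↔ (k < lam ∧ τ k = d))}

def sigmaMap {α : Type} (lam : ℕ) (p : Set (TAtom α) × Set (TAtom α)) (τ : ℕ → ℕ) :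
    TraceC α :=
  (fun k => {a | Sum.inl (a, k) ∈ p.1},
   fun k => {a | Sum.inl (a, k) ∈ p.2},
   fun k => if k < lam then τ k else 0)

/-! ### Metric logic programs and the translation Π_λ -/

inductive BAtom (α : Type) : Type
  | atom : α → BAtom α
  | initB : BAtom α
  | finB : BAtom α

/-- A metric rule: either `□(α ← β)` or `□(○_[m,n) a ← β)`. -/
inductive MRule (α : Type) : Type
  | std : List α → List α → List (BAtom α) → List (BAtom α) → MRule α
  | nxt : ℕ → Option ℕ → α → List (BAtom α) → List (BAtom α) → MRule α

def bToM {α : Type} : BAtom α → MForm α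
  | .atom a => .atom a
  | .initB => .init
  | .finB => mneg (.next 0 none mTop)

/-- The rule body as a metric formula. -/
def MRule.mbody {α : Type} : MRule α → MForm α
  | .std _ _ bp bn =>
      .and (mconj (bp.map bToM)) (mconj (bn.map (fun b => mneg (bToM b))))
  | .nxt _ _ _ bp bn =>
      .and (mconj (bp.map bToM)) (mconj (bn.map (fun b => mneg (bToM b))))

/-- The rule (without the leading `□`) as a metric formula. -/
def MRule.toMForm {α : Type} : MRule α → MForm α
  | .std hp hn bp bn =>
      .imp (MRule.mbody (.std hp hn bp bn))
        (mdisj (hp.map MForm.atom ++ hn.map (fun a => mneg (MForm.atom a))))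
  | .nxt m n a bp bn =>
      .imp (MRule.mbody (.nxt m n a bp bn)) (.next m n (.atom a))

/-- `(H,T,τ)` is an MHT-model (of length `lam`) of program `P`. -/
def MHTModelP {α : Type} (lam : ℕ) (H T : ℕ → Set α) (τ : ℕ → ℕ)
    (P : Set (MRule α)) : Prop :=
  ∀ r ∈ P, ∀ k, k < lam → MSat lam H T τ k r.toMForm

/-- Metric equilibrium model `(⟨T,T⟩, τ)` of `P`. -/
def MetricEq {α : Type} (lam : ℕ) (T : ℕ → Set α) (τ : ℕ → ℕ)
    (P : Set (MRule α)) : Prop :=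
  MHTModelP lam T T τ P ∧
  ∀ H : ℕ → Set α, (∀ k, H k ⊆ T k) → MHTModelP lam H T τ P → ∀ k, k < lam → H k = T k

/-- Translation of body atoms at step `k`, with atoms embedded via `g : α × ℕ → β`. -/
def trB {α β : Type} (g : α × ℕ → β) (lam k : ℕ) : BAtom α → HTForm β
  | .atom a => .atom (g (a, k))
  | .initB => if k = 0 then hTop else .bot
  | .finB => if k = lam - 1 then hTop else .bot

def trBody {α β : Type} (g : α × ℕ → β) (lam k : ℕ) : MRule α → HTForm β
  | .std _ _ bp bn =>
      .and (hconj (bp.map (trB g lam k)))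
           (hconj (bn.map (fun b => hneg (trB g lam k b))))
  | .nxt _ _ _ bp bn =>
      .and (hconj (bp.map (trB g lam k)))
           (hconj (bn.map (fun b => hneg (trB g lam k b))))

/-- Translation `t_k(r)` of a metric rule at step `k`. -/
def trRule {α β : Type} (g : α × ℕ → β) (lam k : ℕ) : MRule α → HTForm β
  | .std hp hn bp bn =>
      .imp (trBody g lam k (.std hp hn bp bn))
        (hdisj (hp.map (fun a => HTForm.atom (g (a, k))) ++
                hn.map (fun a => hneg (HTForm.atom (g (a, k))))))
  | .nxt m n a bp bn =>
      .imp (trBody g lam k (.nxt m n a bp bn))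
        (if k = lam - 1 then .bot else .atom (g (a, k + 1)))

/-- `Π_λ(P)`. -/
def PiT {α β : Type} (g : α × ℕ → β) (lam : ℕ) (P : Set (MRule α)) : Set (HTForm β) :=
  {φ | ∃ r ∈ P, ∃ k, k < lam ∧ φ = trRule g lam k r}

/-! ### The Boolean constraint part Ψ_{λ,ν}(P) -/

def PsiB {α : Type} (lam ν : ℕ) (P : Set (MRule α)) : Set (HTForm (TAtom α)) :=
  {φ | ∃ m n a bp bn, MRule.nxt m n a bp bn ∈ P ∧
    ∃ k d d', k + 1 < lam ∧ d < d' ∧ d' ≤ ν ∧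
      φ = .imp (.and (trBody Sum.inl lam k (.nxt m n a bp bn))
                 (.and (.atom (Sum.inr (k, d))) (.atom (Sum.inr (k + 1, d'))))) .bot ∧
      (d' - d < m ∨ ∃ n', n = some n' ∧ n' ≤ d' - d)}

/-- θ on total timed traces, producing one set over `A* ∪ T`. -/
def thetaTot {α : Type} (lam : ℕ) (T : ℕ → Set α) (τ : ℕ → ℕ) : Set (TAtom α) :=
  {x | (∃ a k, k < lam ∧ a ∈ T k ∧ x = Sum.inl (a, k)) ∨
       (∃ k, k < lam ∧ x = Sum.inr (k, τ k))}

/-! ### HT_c over the mixed signature (Boolean atoms + integer timing variables) -/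

inductive CForm2 (α : Type) : Type
  | bot : CForm2 α
  | batom : α × ℕ → CForm2 α
  | eqC : ℕ → ℕ → CForm2 α
  | diff : ℕ → ℕ → ℤ → CForm2 α
  | and : CForm2 α → CForm2 α → CForm2 α
  | or : CForm2 α → CForm2 α → CForm2 α
  | imp : CForm2 α → CForm2 α → CForm2 α

/-- A valuation: Boolean part (atoms assigned `true`) and integer part. -/
abbrev CVal2 (α : Type) := Set (α × ℕ) × (ℕ → Option ℕ)

def CVal2Le {α : Type} (h t : CVal2 α) : Prop :=
  h.1 ⊆ t.1 ∧ ∀ x d, h.2 x = some d → t.2 x = some d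

def CSat2 {α : Type} : CVal2 α → CVal2 α → CForm2 α → Prop
  | _, _, .bot => False
  | h, _, .batom p => p ∈ h.1
  | h, _, .eqC x d => h.2 x = some d
  | h, _, .diff x y d => ∃ a b : ℕ, h.2 x = some a ∧ h.2 y = some b ∧ (a : ℤ) - b ≤ d
  | h, t, .and φ ψ => CSat2 h t φ ∧ CSat2 h t ψ
  | h, t, .or φ ψ => CSat2 h t φ ∨ CSat2 h t ψ
  | h, t, .imp φ ψ => (CSat2 h t φ → CSat2 h t ψ) ∧ (CSat2 t t φ → CSat2 t t ψ)

def CModel2 {α : Type} (h t : CVal2 α) (Γ : Set (CForm2 α)) : Prop :=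
  ∀ φ ∈ Γ, CSat2 h t φ

/-- Constraint equilibrium model. -/
def CEqModel {α : Type} (t : CVal2 α) (Γ : Set (CForm2 α)) : Prop :=
  CModel2 t t Γ ∧ ∀ h : CVal2 α, CVal2Le h t → CModel2 h t Γ → h = t

def cneg {α : Type} (φ : CForm2 α) : CForm2 α := .imp φ .bot

/-- Conversion of Boolean HT formulas over `α × ℕ` into mixed constraint formulas. -/
def toC2 {α : Type} : HTForm (α × ℕ) → CForm2 α
  | .bot => .bot
  | .atom p => .batom p
  | .and φ ψ => .and (toC2 φ) (toC2 ψ)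
  | .or φ ψ => .or (toC2 φ) (toC2 ψ)
  | .imp φ ψ => .imp (toC2 φ) (toC2 ψ)

def PiC {α : Type} (lam : ℕ) (P : Set (MRule α)) : Set (CForm2 α) :=
  toC2 '' PiT id lam P

def DeltaC2 {α : Type} (lam : ℕ) : Set (CForm2 α) :=
  {CForm2.eqC 0 0} ∪ {r | ∃ k, k + 1 < lam ∧ r = CForm2.diff k (k + 1) (-1)}

def PsiC {α : Type} (lam : ℕ) (P : Set (MRule α)) : Set (CForm2 α) :=
  {φ | ∃ m n a bp bn, MRule.nxt m n a bp bn ∈ P ∧ ∃ k, k + 1 < lam ∧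
    (φ = .imp (.and (toC2 (trBody id lam k (.nxt m n a bp bn)))
               (cneg (.diff k (k + 1) (-(m : ℤ))))) .bot ∨
     ∃ n', n = some n' ∧
       φ = .imp (.and (toC2 (trBody id lam k (.nxt m n a bp bn)))
                 (cneg (.diff (k + 1) k ((n' : ℤ) - 1)))) .bot)}

/-- θ^c on total timed traces. -/
def thetaC {α : Type} (lam : ℕ) (T : ℕ → Set α) (τ : ℕ → ℕ) : CVal2 α :=
  ({p | p.2 < lam ∧ p.1 ∈ T p.2}, fun k => if k < lam then some (τ k) else none)

/-!
Starting from `t_{0,0}`, follow the rules of `Δ_{λ,ν}` inside `T`: whenever `t_{k,τ k} ∈ T`, the rule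
for `(k, τ k)` yields some `t_{k+1,d'} ∈ T` with `τ k < d' ≤ ν`, and we let `τ (k+1)` be such a `d'`.
This `τ` is a timing function whose graph `H ⊆ T` already forms an HT-model `⟨H,T⟩` of `Δ_{λ,ν}`:
each rule is satisfied in the here-world by the next point of the graph, and in the there-world
because `⟨T,T⟩` is a model. Minimality of the equilibrium model forces `H = T`.
-/

lemma htSat_hdisj {α : Type} (H T : Set α) (l : List (HTForm α)) :
    HTSat H T (hdisj l) ↔ ∃ φ ∈ l, HTSat H T φ := by
  induction l with
  | nil => simp [hdisj, HTSat]
  | cons φ l ih =>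
    change HTSat H T φ ∨ HTSat H T (hdisj l) ↔ _
    simp [ih]

def DeltaClosed {β : Type} (f : ℕ × ℕ → β) (lam ν : ℕ) (S : Set β) : Prop :=
  ∀ k d, k + 1 < lam → d ≤ ν → f (k, d) ∈ S → ∃ d', d < d' ∧ d' ≤ ν ∧ f (k + 1, d') ∈ S

lemma htSat_deltaRule {β : Type} (f : ℕ × ℕ → β) (H T : Set β) (k d ν : ℕ) :
    HTSat H T (deltaRule f k d ν) ↔
      (f (k, d) ∈ H → ∃ d', d < d' ∧ d' ≤ ν ∧ f (k + 1, d') ∈ H) ∧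
      (f (k, d) ∈ T → ∃ d', d < d' ∧ d' ≤ ν ∧ f (k + 1, d') ∈ T) := by
  have head : ∀ S : Set β,
      HTSat S T (hdisj (((List.range (ν + 1)).filter (fun d' => decide (d < d'))).map
        (fun d' => .atom (f (k + 1, d'))))) ↔ ∃ d', d < d' ∧ d' ≤ ν ∧ f (k + 1, d') ∈ S := by
    intro S
    rw [htSat_hdisj]
    simp only [List.mem_map, List.mem_filter, List.mem_range, decide_eq_true_eq]
    constructor
    · rintro ⟨_, ⟨d', ⟨hν, hd⟩, rfl⟩, hS⟩
      exact ⟨d', hd, Nat.lt_succ_iff.mp hν, hS⟩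
    · rintro ⟨d', hd, hν, hS⟩
      exact ⟨_, ⟨d', ⟨Nat.lt_succ_of_le hν, hd⟩, rfl⟩, hS⟩
  simp only [deltaRule, HTSat, head]

lemma htModel_deltaB_iff {β : Type} (f : ℕ × ℕ → β) (H T : Set β) (lam ν : ℕ) :
    HTModel H T (DeltaB f lam ν) ↔
      f (0, 0) ∈ H ∧ DeltaClosed f lam ν H ∧ DeltaClosed f lam ν T := by
  constructor
  · intro h
    have rule k d (hk : k + 1 < lam) (hd : d ≤ ν) :=
      (htSat_deltaRule f H T k d ν).1 (h _ (Or.inr ⟨k, d, hk, hd, rfl⟩))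
    exact ⟨h _ (Or.inl rfl), fun k d hk hd => (rule k d hk hd).1,
      fun k d hk hd => (rule k d hk hd).2⟩
  · rintro ⟨h0, hH, hT⟩ φ (rfl | ⟨k, d, hk, hd, rfl⟩)
    · exact h0
    · exact (htSat_deltaRule f H T k d ν).2 ⟨hH k d hk hd, hT k d hk hd⟩

open Classical in
/-- The fallback `τ k + 1` only keeps the chain strictly increasing where `S` offers no successor. -/
noncomputable def deltaChain (ν : ℕ) (S : Set (ℕ × ℕ)) : ℕ → ℕ
  | 0 => 0
  | k + 1 =>
    if h : ∃ d', deltaChain ν S k < d' ∧ d' ≤ ν ∧ (k + 1, d') ∈ S then h.choose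
    else deltaChain ν S k + 1

section deltaChain

variable {ν : ℕ} {S : Set (ℕ × ℕ)}

lemma deltaChain_succ_spec {k : ℕ}
    (h : ∃ d', deltaChain ν S k < d' ∧ d' ≤ ν ∧ (k + 1, d') ∈ S) :
    deltaChain ν S k < deltaChain ν S (k + 1) ∧ deltaChain ν S (k + 1) ≤ ν ∧
      (k + 1, deltaChain ν S (k + 1)) ∈ S := by
  rw [deltaChain, dif_pos h]
  exact h.choose_spec

lemma deltaChain_lt_succ (k : ℕ) : deltaChain ν S k < deltaChain ν S (k + 1) := by
  by_cases h : ∃ d', deltaChain ν S k < d' ∧ d' ≤ ν ∧ (k + 1, d') ∈ S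
  · exact (deltaChain_succ_spec h).1
  · rw [deltaChain, dif_neg h]
    exact Nat.lt_succ_self _

lemma timingFn_deltaChain (lam : ℕ) : TimingFn lam (deltaChain ν S) :=
  ⟨rfl, fun k _ => deltaChain_lt_succ k⟩

lemma deltaChain_mem {lam : ℕ} (h0 : (0, 0) ∈ S) (hS : DeltaClosed id lam ν S) :
    ∀ k < lam, (k, deltaChain ν S k) ∈ S ∧ deltaChain ν S k ≤ ν := by
  intro k
  induction k with
  | zero => exact fun _ => ⟨h0, Nat.zero_le ν⟩
  | succ k ih =>
    intro hk
    obtain ⟨hmem, hν⟩ := ih (Nat.lt_of_succ_lt hk)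
    obtain ⟨-, hν', hmem'⟩ := deltaChain_succ_spec (hS k _ hk hν hmem)
    exact ⟨hmem', hν'⟩

end deltaChain

lemma htModel_graphOn_deltaB {lam ν : ℕ} {τ : ℕ → ℕ} {T : Set (ℕ × ℕ)} (hlam : 0 < lam)
    (hτ : TimingFn lam τ) (hν : ∀ k < lam, τ k ≤ ν) (hT : DeltaClosed id lam ν T) :
    HTModel ((Set.Iio lam).graphOn τ) T (DeltaB id lam ν) := by
  rw [htModel_deltaB_iff]
  refine ⟨by simp [hlam, hτ.1], ?_, hT⟩
  rintro k d hk - hd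
  obtain rfl : τ k = d := (Set.mem_graphOn.mp hd).2
  exact ⟨τ (k + 1), hτ.2 k hk, hν _ hk, by simp [hk]⟩


/-- Prop. 1: equilibrium models of `Δ_{λ,ν}` are timed wrt `λ`. -/
theorem delta_equilibrium_timed (lam ν : ℕ) (T : Set (ℕ × ℕ))
    (h : EqModel T (DeltaB id lam ν)) :
    ∃ τ : ℕ → ℕ, TimedHT id lam T T τ := by
  obtain ⟨hmod, hmin⟩ := h
  obtain ⟨h00, hT, -⟩ := (htModel_deltaB_iff id T T lam ν).1 hmod
  have hchain := deltaChain_mem h00 hT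
  refine ⟨deltaChain ν T, timingFn_deltaChain lam, fun k hk d => ?_⟩
  have hgraph : (Set.Iio lam).graphOn (deltaChain ν T) = T :=
    hmin _ (fun _ ⟨j, hj, hx⟩ => hx ▸ (hchain j hj).1)
      (htModel_graphOn_deltaB (Nat.zero_lt_of_lt hk) (timingFn_deltaChain lam)
        (fun j hj => (hchain j hj).2) hT)
  have hiff : (k, d) ∈ T ↔ deltaChain ν T k = d := by
    rw [← Set.ext_iff.mp hgraph, Set.mem_graphOn]
    exact and_iff_right hk
  exact ⟨hiff, hiff⟩
end

section
/- Let ⟨H,T⟩ be an HT-interpretation over atoms {t_{k,d}} that is timed wrt λ with induced timing function τ. Then ⟨H,T⟩ is an HT-model of Δ_{λ,ν} for ν = τ(λ−1). -/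
/-! The fact `t_{0,0}` holds because `τ 0 = 0`. In either world the body `t_{k,d}` of a rule
forces `d = τ k`, and its head then contains the true atom `t_{k+1,τ(k+1)}`, since
`τ k < τ (k+1) ≤ τ (λ-1)` by strict monotonicity of `τ`. -/

theorem TimingFn.strictMonoOn {lam : ℕ} {τ : ℕ → ℕ} (h : TimingFn lam τ) :
    StrictMonoOn τ (Set.Iio lam) :=
  strictMonoOn_Iic_of_lt_succ (n := lam - 1) (fun k hk => h.2 k (by omega)) |>.mono
    fun k (hk : k < lam) => show k ≤ lam - 1 by omega

theorem TimingFn.le_last {lam : ℕ} {τ : ℕ → ℕ} (h : TimingFn lam τ) {k : ℕ} (hk : k < lam) :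
    τ k ≤ τ (lam - 1) :=
  h.strictMonoOn.monotoneOn hk (show lam - 1 < lam by omega) (by omega)

theorem HTSat.hdisj_of_mem {α : Type} {H T : Set α} {l : List (HTForm α)} {φ : HTForm α}
    (hφ : φ ∈ l) (hs : HTSat H T φ) : HTSat H T (hdisj l) := by
  induction l with
  | nil => cases hφ
  | cons ψ l ih =>
    rcases List.mem_cons.mp hφ with rfl | hφ
    · exact Or.inl hs
    · exact Or.inr (ih hφ)

theorem HTSat.deltaRule_head {β : Type} {f : ℕ × ℕ → β} {H T : Set β} {k d d' ν : ℕ}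
    (hd : d < d') (hν : d' ≤ ν) (hmem : f (k + 1, d') ∈ H) :
    HTSat H T (hdisj (((List.range (ν + 1)).filter (fun d' => decide (d < d'))).map
      (fun d' => .atom (f (k + 1, d'))))) :=
  HTSat.hdisj_of_mem (φ := .atom (f (k + 1, d')))
    (List.mem_map_of_mem (List.mem_filter.mpr ⟨List.mem_range.mpr (by omega), by simpa⟩)) hmem

theorem HTSat.deltaRule {β : Type} {f : ℕ × ℕ → β} {H T : Set β} {τ : ℕ → ℕ} {k d ν : ℕ}
    (hstep : τ k < τ (k + 1)) (hν : τ (k + 1) ≤ ν)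
    (hH : f (k, d) ∈ H → τ k = d) (hT : f (k, d) ∈ T → τ k = d)
    (hH' : f (k + 1, τ (k + 1)) ∈ H) (hT' : f (k + 1, τ (k + 1)) ∈ T) :
    HTSat H T (deltaRule f k d ν) :=
  ⟨fun hmem => HTSat.deltaRule_head (hH hmem ▸ hstep) hν hH',
    fun hmem => HTSat.deltaRule_head (hT hmem ▸ hstep) hν hT'⟩

theorem timed_model_delta_general (lam : ℕ) (hlam : 1 ≤ lam) (H T : Set (ℕ × ℕ))
    (τ : ℕ → ℕ) (h : TimedHT id lam H T τ) :
    HTModel H T (DeltaB id lam (τ (lam - 1))) := by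
  obtain ⟨hτ, hatoms⟩ := h
  rintro φ (rfl | ⟨k, d, hk, -, rfl⟩)
  · exact (hatoms 0 hlam 0).1.mpr hτ.1
  · have hk' : k < lam := by omega
    exact HTSat.deltaRule (hτ.2 k hk) (hτ.le_last hk)
      (hatoms k hk' d).1.mp (hatoms k hk' d).2.mp
      ((hatoms (k + 1) hk _).1.mpr rfl) ((hatoms (k + 1) hk _).2.mpr rfl)

/-- Prop. 2: a timed HT-interpretation is an HT-model of `Δ_{λ,ν}` for `ν = τ(λ-1)`. -/
theorem timed_model_delta (lam : ℕ) (hlam : 1 ≤ lam) (H T : Set (ℕ × ℕ)) (hHT : H ⊆ T)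
    (τ : ℕ → ℕ) (h : TimedHT id lam H T τ) :
    HTModel H T (DeltaB id lam (τ (lam - 1))) :=
  timed_model_delta_general lam hlam H T τ h
end

section
/- Every HT_c-model ⟨h,t⟩ of Δ^c_λ is timed wrt λ: there exists a timing function τ wrt λ with h(t_k) = τ(k) and t(t_k) = τ(k) for all 0 ≤ k < λ. -/
/-!
The fact `t_0 = 0` and the constraints `t_k - t_{k+1} ≤ -1` hold already in the here-world, and a
difference constraint is only satisfied when both of its variables are defined. Hence every `t_k`
with `k < λ` is defined in `h` (at `k = 0` by the fact, otherwise by the constraint linking `t_{k-1}`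
to `t_k`), the values `h(t_k)` strictly increase from `0`, and `h ⊆ t` transfers them to `t`.
-/

namespace CModel

variable {lam : ℕ} {h t : CVal ℕ}

theorem deltaC_init (hm : CModel h t (DeltaC lam)) : h 0 = some 0 :=
  hm (.eqC 0 0) (Or.inl rfl)

theorem deltaC_step (hm : CModel h t (DeltaC lam)) {k : ℕ} (hk : k + 1 < lam) :
    ∃ a b : ℕ, h k = some a ∧ h (k + 1) = some b ∧ a < b := by
  obtain ⟨a, b, ha, hb, hab⟩ := hm (.diff k (k + 1) (-1)) (Or.inr ⟨k, hk, rfl⟩)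
  exact ⟨a, b, ha, hb, by omega⟩

theorem deltaC_defined (hm : CModel h t (DeltaC lam)) {k : ℕ} (hk : k < lam) :
    ∃ a, h k = some a := by
  cases k with
  | zero => exact ⟨0, hm.deltaC_init⟩
  | succ k =>
    obtain ⟨-, b, -, hb, -⟩ := hm.deltaC_step hk
    exact ⟨b, hb⟩

end CModel

/-- Prop. 4: every HT_c-model of `Δ^c_λ` is timed wrt `λ`. -/
theorem deltac_model_timed (lam : ℕ) (h t : CVal ℕ) (hle : CValLe h t)
    (hm : CModel h t (DeltaC lam)) :
    ∃ τ : ℕ → ℕ, TimingFn lam τ ∧ ∀ k, k < lam → h k = some (τ k) ∧ t k = some (τ k) := by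
  refine ⟨fun k => (h k).getD 0, ⟨by simp [hm.deltaC_init], fun k hk => ?_⟩, fun k hk => ?_⟩
  · obtain ⟨a, b, ha, hb, hab⟩ := hm.deltaC_step hk
    simpa [ha, hb] using hab
  · obtain ⟨a, ha⟩ := hm.deltaC_defined hk
    have hτ : h k = some ((h k).getD 0) := by simp [ha]
    exact ⟨hτ, hle k _ hτ⟩
end

section
/- Conversely, every HT_c-interpretation ⟨h,t⟩ that is timed wrt λ is an HT_c-model of Δ^c_λ. Hence the HT_c-models of Δ^c_λ restricted to the variables t_0,…,t_{λ−1} are exactly the timed interpretations. -/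
section DeltaC

variable {lam : ℕ} {h t : CVal ℕ}

theorem cSat_diff_neg_one_iff {x y : ℕ} :
    CSat h t (.diff x y (-1)) ↔ ∃ a b : ℕ, h x = some a ∧ h y = some b ∧ a < b := by
  simp only [CSat]
  refine exists₂_congr fun a b => and_congr_right' <| and_congr_right' ?_
  omega

theorem cModel_deltaC_iff :
    CModel h t (DeltaC lam) ↔
      h 0 = some 0 ∧ ∀ k, k + 1 < lam → ∃ a b : ℕ, h k = some a ∧ h (k + 1) = some b ∧ a < b := by
  simp only [CModel, DeltaC, Set.mem_union, Set.mem_singleton_iff, Set.mem_ofPred_eq]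
  constructor
  · intro hm
    exact ⟨hm _ (Or.inl rfl), fun k hk => cSat_diff_neg_one_iff.1 (hm _ (Or.inr ⟨k, hk, rfl⟩))⟩
  · rintro ⟨h0, hstep⟩ φ (rfl | ⟨k, hk, rfl⟩)
    · exact h0
    · exact cSat_diff_neg_one_iff.2 (hstep k hk)

theorem cModel_deltaC_of_timedC (hlam : 0 < lam) (htimed : TimedC lam h t) :
    CModel h t (DeltaC lam) := by
  obtain ⟨τ, ⟨hτ0, hτmono⟩, hval⟩ := htimed
  refine cModel_deltaC_iff.2 ⟨by simpa [hτ0] using (hval 0 hlam).1, fun k hk => ?_⟩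
  exact ⟨τ k, τ (k + 1), (hval k (by omega)).1, (hval (k + 1) hk).1, hτmono k hk⟩

theorem exists_eq_some_of_cModel_deltaC (hm : CModel h t (DeltaC lam)) {k : ℕ} (hk : k < lam) :
    ∃ a, h k = some a := by
  obtain ⟨h0, hstep⟩ := cModel_deltaC_iff.1 hm
  cases k with
  | zero => exact ⟨0, h0⟩
  | succ j =>
    obtain ⟨-, b, -, hb, -⟩ := hstep j hk
    exact ⟨b, hb⟩

-- The timing function is `h` itself; `getD 0` only fills in variables outside `[0, lam)`.
theorem timedC_of_cModel_deltaC (hle : CValLe h t) (hm : CModel h t (DeltaC lam)) :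
    TimedC lam h t := by
  obtain ⟨h0, hstep⟩ := cModel_deltaC_iff.1 hm
  refine ⟨fun k => (h k).getD 0, ⟨by simp [h0], fun k hk => ?_⟩, fun k hk => ?_⟩
  · obtain ⟨a, b, ha, hb, hab⟩ := hstep k hk
    simpa [ha, hb] using hab
  · obtain ⟨a, ha⟩ := exists_eq_some_of_cModel_deltaC hm hk
    simp [ha, hle k a ha]

end DeltaC

/-- Prop. 5: every timed HT_c-interpretation is a model of `Δ^c_λ`; hence, for
interpretations `⟨h,t⟩` (with `h ⊆ t`), being a model of `Δ^c_λ` is exactly being timed. -/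
theorem timed_model_deltac (lam : ℕ) (hlam : 1 ≤ lam) :
    (∀ h t : CVal ℕ, TimedC lam h t → CModel h t (DeltaC lam)) ∧
    (∀ h t : CVal ℕ, CValLe h t → (CModel h t (DeltaC lam) ↔ TimedC lam h t)) :=
  ⟨fun _ _ => cModel_deltaC_of_timedC hlam,
    fun _ _ hle => ⟨timedC_of_cModel_deltaC hle, cModel_deltaC_of_timedC hlam⟩⟩
end

section
/- Let P be a metric logic program in which every interval occurring in a head operator ○_I is [0,ω). Then for any fixed timing function τ wrt λ, the map M ↦ θ(M) restricted to the A*-part gives a one-to-one correspondence between MHT-models of P of length λ with timing function τ and HT-models over A* of the translated program Π_λ(P). -/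
/-! Since every head operator is `○_[0,ω)`, its timing condition is vacuous, so at a step
`k < λ` a metric rule holds in an MHT-trace exactly when its translation `t_k(r)` holds in
the interpretation over `A*` that stamps each atom with its step; `F` and a head `○` both
fail precisely at `k = λ - 1`, as in `t_k`. On traces that vanish beyond `λ`, this
stamping is inverted by reading off the step-`k` slice. -/

namespace PiCorrespondence

variable {α : Type}

def stamp (lam : ℕ) (H : ℕ → Set α) : Set (α × ℕ) := {p | p.2 < lam ∧ p.1 ∈ H p.2}

def unstamp (lam : ℕ) (S : Set (α × ℕ)) : ℕ → Set α :=
  fun k => if k < lam then {a | (a, k) ∈ S} else ∅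

lemma stamp_mono {lam : ℕ} {H T : ℕ → Set α} (h : ∀ k, H k ⊆ T k) :
    stamp lam H ⊆ stamp lam T :=
  fun _ hp => ⟨hp.1, h _ hp.2⟩

lemma unstamp_mono {lam : ℕ} {S S' : Set (α × ℕ)} (h : S ⊆ S') (k : ℕ) :
    unstamp lam S k ⊆ unstamp lam S' k := by
  unfold unstamp
  split_ifs
  exacts [fun _ ha => h ha, subset_rfl]

lemma unstamp_of_le {lam k : ℕ} (S : Set (α × ℕ)) (hk : lam ≤ k) : unstamp lam S k = ∅ :=
  if_neg (Nat.not_lt.mpr hk)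

lemma stamp_unstamp {lam : ℕ} {S : Set (α × ℕ)} (hS : ∀ x ∈ S, x.2 < lam) :
    stamp lam (unstamp lam S) = S := by
  ext ⟨a, k⟩
  by_cases hk : k < lam
  · simp [stamp, unstamp, hk]
  · simp only [stamp, unstamp, hk, Set.mem_ofPred_eq, false_and, false_iff]
    exact fun h => hk (hS _ h)

lemma unstamp_stamp {lam : ℕ} {H : ℕ → Set α} (hH : ∀ k, lam ≤ k → H k = ∅) :
    unstamp lam (stamp lam H) = H := by
  funext k
  by_cases hk : k < lam
  · simp [stamp, unstamp, hk]
  · rw [unstamp_of_le _ (Nat.le_of_not_lt hk), hH k (Nat.le_of_not_lt hk)]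

lemma HTSat_hTop {β : Type} (A B : Set β) : HTSat A B hTop := by
  simp [hTop, hneg, HTSat]

lemma MSat_mTop (lam : ℕ) (H T : ℕ → Set α) (τ : ℕ → ℕ) (k : ℕ) :
    MSat lam H T τ k mTop := by
  simp [mTop, mneg, MSat]

lemma forall₂_map_of_forall {X Y Z : Type} {R : Y → Z → Prop} {f : X → Y} {g : X → Z}
    {l : List X} (h : ∀ x ∈ l, R (f x) (g x)) : List.Forall₂ R (l.map f) (l.map g) :=
  List.forall₂_map_left_iff.2 (List.forall₂_map_right_iff.2 (List.forall₂_same.2 h))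

section Translation

variable {β : Type} {lam : ℕ} {H T : ℕ → Set α} {τ : ℕ → ℕ} {k : ℕ} {A B : Set β}

lemma MSat_mconj_iff_HTSat_hconj {l : List (MForm α)} {l' : List (HTForm β)}
    (h : List.Forall₂ (fun φ ψ => MSat lam H T τ k φ ↔ HTSat A B ψ) l l') :
    MSat lam H T τ k (mconj l) ↔ HTSat A B (hconj l') := by
  induction h with
  | nil => exact iff_of_true (MSat_mTop ..) (HTSat_hTop ..)
  | cons h _ ih => exact and_congr h ih

lemma MSat_mdisj_iff_HTSat_hdisj {l : List (MForm α)} {l' : List (HTForm β)}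
    (h : List.Forall₂ (fun φ ψ => MSat lam H T τ k φ ↔ HTSat A B ψ) l l') :
    MSat lam H T τ k (mdisj l) ↔ HTSat A B (hdisj l') := by
  induction h with
  | nil => exact Iff.rfl
  | cons h _ ih => exact or_congr h ih

end Translation

section RuleTranslation

variable {lam : ℕ} (H T : ℕ → Set α) (τ : ℕ → ℕ) {k : ℕ}

lemma MSat_bToM_iff (hk : k < lam) (b : BAtom α) :
    MSat lam H T τ k (bToM b) ↔ HTSat (stamp lam H) (stamp lam T) (trB id lam k b) := by
  cases b with
  | atom a => simp [bToM, trB, MSat, HTSat, stamp, hk]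
  | initB => by_cases h : k = 0 <;> simp [bToM, trB, MSat, HTSat, h, HTSat_hTop]
  | finB =>
    by_cases h : k = lam - 1
    · have hlast : ¬ k + 1 < lam := by omega
      simp only [bToM, trB, if_pos h]
      exact iff_of_true ⟨fun hn => absurd hn.1 hlast, fun hn => absurd hn.1 hlast⟩
        (HTSat_hTop ..)
    · have hnext : k + 1 < lam := by omega
      simp [bToM, trB, h, mneg, mTop, MSat, HTSat, hnext, inI]

lemma MSat_mneg_bToM_iff (hk : k < lam) (b : BAtom α) :
    MSat lam H T τ k (mneg (bToM b)) ↔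
      HTSat (stamp lam H) (stamp lam T) (hneg (trB id lam k b)) := by
  simp only [mneg, hneg, MSat, HTSat, MSat_bToM_iff H T τ hk, MSat_bToM_iff T T τ hk]

lemma MSat_mbody_iff (hk : k < lam) (r : MRule α) :
    MSat lam H T τ k r.mbody ↔ HTSat (stamp lam H) (stamp lam T) (trBody id lam k r) := by
  cases r <;>
    exact and_congr
      (MSat_mconj_iff_HTSat_hconj (forall₂_map_of_forall fun b _ => MSat_bToM_iff H T τ hk b))
      (MSat_mconj_iff_HTSat_hconj
        (forall₂_map_of_forall fun b _ => MSat_mneg_bToM_iff H T τ hk b))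

lemma MSat_std_head_iff (hk : k < lam) (hp hn : List α) :
    MSat lam H T τ k (mdisj (hp.map MForm.atom ++ hn.map (fun a => mneg (MForm.atom a)))) ↔
      HTSat (stamp lam H) (stamp lam T)
        (hdisj (hp.map (fun a => HTForm.atom (id (a, k))) ++
          hn.map (fun a => hneg (HTForm.atom (id (a, k)))))) := by
  refine MSat_mdisj_iff_HTSat_hdisj (List.rel_append ?_ ?_)
  · exact forall₂_map_of_forall fun a _ => MSat_bToM_iff H T τ hk (.atom a)
  · exact forall₂_map_of_forall fun a _ => MSat_mneg_bToM_iff H T τ hk (.atom a)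

lemma MSat_next_head_iff (hk : k < lam) (a : α) :
    MSat lam H T τ k (.next 0 none (.atom a)) ↔
      HTSat (stamp lam H) (stamp lam T)
        (if k = lam - 1 then .bot else .atom (id (a, k + 1))) := by
  by_cases h : k = lam - 1
  · have hlast : ¬ k + 1 < lam := by omega
    simp only [if_pos h]
    exact iff_of_false (fun hn => hlast hn.1) id
  · have hnext : k + 1 < lam := by omega
    simp [h, MSat, HTSat, hnext, inI, stamp]

end RuleTranslation

def _root_.MRule.HasTrivialHeadInterval : MRule α → Prop
  | .std .. => True
  | .nxt m n .. => m = 0 ∧ n = none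

lemma MSat_toMForm_iff {lam k : ℕ} (H T : ℕ → Set α) (τ : ℕ → ℕ) (hk : k < lam)
    {r : MRule α} (hr : r.HasTrivialHeadInterval) :
    MSat lam H T τ k r.toMForm ↔ HTSat (stamp lam H) (stamp lam T) (trRule id lam k r) := by
  cases r with
  | std hp hn bp bn =>
    exact and_congr
      (imp_congr (MSat_mbody_iff H T τ hk _) (MSat_std_head_iff H T τ hk hp hn))
      (imp_congr (MSat_mbody_iff T T τ hk _) (MSat_std_head_iff T T τ hk hp hn))
  | nxt m n a bp bn =>
    obtain ⟨rfl, rfl⟩ := hr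
    exact and_congr
      (imp_congr (MSat_mbody_iff H T τ hk _) (MSat_next_head_iff H T τ hk a))
      (imp_congr (MSat_mbody_iff T T τ hk _) (MSat_next_head_iff T T τ hk a))

lemma MHTModelP_iff_HTModel_PiT {lam : ℕ} {P : Set (MRule α)}
    (hP : ∀ r ∈ P, r.HasTrivialHeadInterval) (H T : ℕ → Set α) (τ : ℕ → ℕ) :
    MHTModelP lam H T τ P ↔ HTModel (stamp lam H) (stamp lam T) (PiT id lam P) := by
  constructor
  · rintro hM φ ⟨r, hr, k, hk, rfl⟩
    exact (MSat_toMForm_iff H T τ hk (hP r hr)).1 (hM r hr k hk)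
  · intro hM r hr k hk
    exact (MSat_toMForm_iff H T τ hk (hP r hr)).2 (hM _ ⟨r, hr, k, hk, rfl⟩)

end PiCorrespondence

open PiCorrespondence in
theorem pi_correspondence_general {α : Type} (lam : ℕ) (P : Set (MRule α))
    (hP : ∀ m n a bp bn, MRule.nxt m n a bp bn ∈ P → m = 0 ∧ n = none)
    (τ : ℕ → ℕ) :
    Set.BijOn
      (fun HT : (ℕ → Set α) × (ℕ → Set α) =>
        (({p : α × ℕ | p.2 < lam ∧ p.1 ∈ HT.1 p.2},
          {p : α × ℕ | p.2 < lam ∧ p.1 ∈ HT.2 p.2}) : Set (α × ℕ) × Set (α × ℕ)))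
      {HT | (∀ k, HT.1 k ⊆ HT.2 k) ∧ (∀ k, lam ≤ k → HT.1 k = ∅ ∧ HT.2 k = ∅) ∧
            MHTModelP lam HT.1 HT.2 τ P}
      {p | p.1 ⊆ p.2 ∧ (∀ x ∈ p.2, x.2 < lam) ∧ HTModel p.1 p.2 (PiT id lam P)} := by
  have hP' : ∀ r ∈ P, r.HasTrivialHeadInterval := by
    rintro (_ | ⟨m, n, a, bp, bn⟩) hr
    exacts [trivial, hP m n a bp bn hr]
  refine Set.InvOn.bijOn (f' := fun S => (unstamp lam S.1, unstamp lam S.2)) ⟨?_, ?_⟩ ?_ ?_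
  · rintro ⟨H, T⟩ ⟨-, hvanish, -⟩
    simp only [Prod.mk.injEq]
    exact ⟨unstamp_stamp fun k hk => (hvanish k hk).1, unstamp_stamp fun k hk => (hvanish k hk).2⟩
  · rintro ⟨S, S'⟩ ⟨hsub, hbound, -⟩
    simp only [Prod.mk.injEq]
    exact ⟨stamp_unstamp fun x hx => hbound x (hsub hx), stamp_unstamp hbound⟩
  · rintro ⟨H, T⟩ ⟨hsub, -, hM⟩
    exact ⟨stamp_mono hsub, fun x hx => hx.1, (MHTModelP_iff_HTModel_PiT hP' H T τ).1 hM⟩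
  · rintro ⟨S, S'⟩ ⟨hsub, hbound, hM⟩
    refine ⟨unstamp_mono hsub, fun k hk => ⟨unstamp_of_le S hk, unstamp_of_le S' hk⟩, ?_⟩
    refine (MHTModelP_iff_HTModel_PiT hP' _ _ τ).2 ?_
    rwa [stamp_unstamp fun x hx => hbound x (hsub hx), stamp_unstamp hbound]

/-- For metric programs whose head intervals are all `[0,ω)` and a fixed timing
function `τ`, θ (restricted to the `A*`-part) is a one-to-one correspondence between
MHT-models of `P` of length `λ` with timing `τ` and HT-models of `Π_λ(P)`. -/
theorem pi_correspondence {α : Type} (lam : ℕ) (P : Set (MRule α))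
    (hP : ∀ m n a bp bn, MRule.nxt m n a bp bn ∈ P → m = 0 ∧ n = none)
    (τ : ℕ → ℕ) (hτ : TimingFn lam τ) :
    Set.BijOn
      (fun HT : (ℕ → Set α) × (ℕ → Set α) =>
        (({p : α × ℕ | p.2 < lam ∧ p.1 ∈ HT.1 p.2},
          {p : α × ℕ | p.2 < lam ∧ p.1 ∈ HT.2 p.2}) : Set (α × ℕ) × Set (α × ℕ)))
      {HT | (∀ k, HT.1 k ⊆ HT.2 k) ∧ (∀ k, lam ≤ k → HT.1 k = ∅ ∧ HT.2 k = ∅) ∧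
            MHTModelP lam HT.1 HT.2 τ P}
      {p | p.1 ⊆ p.2 ∧ (∀ x ∈ p.2, x.2 < lam) ∧ HTModel p.1 p.2 (PiT id lam P)} :=
  pi_correspondence_general lam P hP τ
end

section
/- Correctness of the Boolean translation: if ⟨T,T⟩ is an equilibrium model of Π_λ(P) ∪ Δ_{λ,ν} ∪ Ψ_{λ,ν}(P) for a metric logic program P and λ, ν ∈ ℕ, then σ(⟨T,T⟩) is a metric equilibrium model of P. -/
/-!
An equilibrium model `T*` contains `t_{0,0}`, and the rules of `Δ_{λ,ν}` let one follow a chain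
`t_{0,τ 0}, t_{1,τ 1}, …` of timing atoms of `T*` with `τ` strictly increasing and bounded by `ν`.
For a here-trace `H` below `σ(T*)`, the set `θ(H, τ)` made of the atoms of `H` and of this chain
alone satisfies `Δ_{λ,ν}` through the chain, satisfies `Ψ_{λ,ν}(P)` because its rules are
constraints, and satisfies `Π_λ(P)` as soon as `H` satisfies the rules of `P` with their head
intervals ignored; minimality of `T*` then forces `θ(H, τ) = T*`. For `H = σ(T*)` this says that
the chain is the only timing information in `T*`, so the constraints of `Ψ_{λ,ν}(P)` restore the
head intervals and `σ(T*)` is a metric model; for a metric model `H` below it, `θ(H, τ) = T*`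
gives `H = σ(T*)`.
-/

section HereAndThere

variable {β : Type} {H T : Set β}

theorem htSat_total_of_htSat (hHT : H ⊆ T) : ∀ {φ : HTForm β}, HTSat H T φ → HTSat T T φ
  | .bot, h => h
  | .atom _, h => hHT h
  | .and _ _, h => ⟨htSat_total_of_htSat hHT h.1, htSat_total_of_htSat hHT h.2⟩
  | .or _ _, h => h.imp (htSat_total_of_htSat hHT) (htSat_total_of_htSat hHT)
  | .imp _ _, h => ⟨h.2, h.2⟩

theorem htSat_hneg_of_total (hHT : H ⊆ T) {φ : HTForm β} (h : HTSat T T (hneg φ)) :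
    HTSat H T (hneg φ) :=
  ⟨fun hφ => h.1 (htSat_total_of_htSat hHT hφ), h.2⟩

theorem htSat_hconj_iff (l : List (HTForm β)) :
    HTSat H T (hconj l) ↔ ∀ φ ∈ l, HTSat H T φ := by
  induction l with
  | nil => simp [hconj, hTop, hneg, HTSat]
  | cons φ l ih => simp [hconj, HTSat, ← ih]

theorem htSat_hdisj_iff (l : List (HTForm β)) :
    HTSat H T (hdisj l) ↔ ∃ φ ∈ l, HTSat H T φ := by
  induction l with
  | nil => simp [hdisj, HTSat]
  | cons φ l ih => simp [hdisj, HTSat, ← ih]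

theorem htModel_union_iff {Γ Δ : Set (HTForm β)} :
    HTModel H T (Γ ∪ Δ) ↔ HTModel H T Γ ∧ HTModel H T Δ :=
  forall₂_or_left

end HereAndThere

section Metric

variable {α : Type} {lam : ℕ} {H T : ℕ → Set α} {τ : ℕ → ℕ} {k : ℕ}

theorem mSat_mconj_iff (l : List (MForm α)) :
    MSat lam H T τ k (mconj l) ↔ ∀ φ ∈ l, MSat lam H T τ k φ := by
  induction l with
  | nil => simp [mconj, mTop, mneg, MSat]
  | cons φ l ih => simp [mconj, MSat, ← ih]

theorem mSat_mdisj_iff (l : List (MForm α)) :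
    MSat lam H T τ k (mdisj l) ↔ ∃ φ ∈ l, MSat lam H T τ k φ := by
  induction l with
  | nil => simp [mdisj, MSat]
  | cons φ l ih => simp [mdisj, MSat, ← ih]

theorem inI_zero_none (d : ℕ) : inI 0 none d :=
  ⟨d.zero_le, fun _ h => nomatch h⟩

theorem not_inI_iff {m d : ℕ} {n : Option ℕ} :
    ¬ inI m n d ↔ d < m ∨ ∃ n', n = some n' ∧ n' ≤ d := by
  cases n <;> simp [inI]
  omega

/-- The rule with its head interval widened to `[0, ω)`: this is all of a rule that `Π_λ` sees. -/
def MRule.untimed : MRule α → MRule α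
  | .std hp hn bp bn => .std hp hn bp bn
  | .nxt _ _ a bp bn => .nxt 0 none a bp bn

theorem MSat.untimed {r : MRule α} (h : MSat lam H T τ k r.toMForm) :
    MSat lam H T τ k r.untimed.toMForm := by
  cases r with
  | std => exact h
  | nxt m n a bp bn =>
    exact ⟨fun hb => ⟨(h.1 hb).1, (h.1 hb).2.1, inI_zero_none _⟩,
      fun hb => ⟨(h.2 hb).1, (h.2 hb).2.1, inI_zero_none _⟩⟩

theorem MSat.of_untimed_of_inI {m : ℕ} {n : Option ℕ} {a : α} {bp bn : List (BAtom α)}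
    (h : MSat lam T T τ k (MRule.nxt m n a bp bn).untimed.toMForm)
    (hI : MSat lam T T τ k (MRule.nxt m n a bp bn).mbody → inI m n (τ (k + 1) - τ k)) :
    MSat lam T T τ k (MRule.nxt m n a bp bn).toMForm :=
  have hhead : MSat lam T T τ k (MRule.nxt m n a bp bn).mbody →
      MSat lam T T τ k (.next m n (.atom a)) :=
    fun hb => ⟨(h.1 hb).1, (h.1 hb).2.1, hI hb⟩
  ⟨hhead, hhead⟩

end Metric

section Translation

variable {α : Type} {lam : ℕ}

def EncodesTrace (lam : ℕ) (S : Set (TAtom α)) (F : ℕ → Set α) : Prop :=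
  ∀ a k, k < lam → (Sum.inl (a, k) ∈ S ↔ a ∈ F k)

def traceOf (S : Set (TAtom α)) : ℕ → Set α :=
  fun k => {a | Sum.inl (a, k) ∈ S}

theorem encodesTrace_traceOf (S : Set (TAtom α)) : EncodesTrace lam S (traceOf S) :=
  fun _ _ _ => Iff.rfl

theorem encodesTrace_thetaTot (F : ℕ → Set α) (τ : ℕ → ℕ) :
    EncodesTrace lam (thetaTot lam F τ) F := by
  intro a k hk
  simp [thetaTot, hk]

variable {Hs Ts : Set (TAtom α)} {Hf Tf : ℕ → Set α} {τ : ℕ → ℕ} {k : ℕ}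

theorem htSat_trB_iff (hH : EncodesTrace lam Hs Hf) (hk : k < lam) (b : BAtom α) :
    HTSat Hs Ts (trB Sum.inl lam k b) ↔ MSat lam Hf Tf τ k (bToM b) := by
  cases b with
  | atom a => exact hH a k hk
  | initB => by_cases h : k = 0 <;> simp [trB, bToM, MSat, h, hTop, hneg, HTSat]
  | finB =>
    by_cases h : k = lam - 1 <;> simp [trB, bToM, MSat, h, hTop, hneg, HTSat, mneg, mTop, inI] <;>
      omega

theorem htSat_hneg_trB_iff (hH : EncodesTrace lam Hs Hf) (hT : EncodesTrace lam Ts Tf)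
    (hk : k < lam) (b : BAtom α) :
    HTSat Hs Ts (hneg (trB Sum.inl lam k b)) ↔ MSat lam Hf Tf τ k (mneg (bToM b)) :=
  and_congr (imp_congr (htSat_trB_iff hH hk b) Iff.rfl) (imp_congr (htSat_trB_iff hT hk b) Iff.rfl)

theorem htSat_trBody_iff (hH : EncodesTrace lam Hs Hf) (hT : EncodesTrace lam Ts Tf)
    (hk : k < lam) (r : MRule α) :
    HTSat Hs Ts (trBody Sum.inl lam k r) ↔ MSat lam Hf Tf τ k r.mbody := by
  obtain ⟨hp, hn, bp, bn, rfl⟩ | ⟨m, n, a, bp, bn, rfl⟩ :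
      (∃ hp hn bp bn, r = .std hp hn bp bn) ∨ ∃ m n a bp bn, r = .nxt m n a bp bn := by
    cases r <;> simp
  all_goals
    refine and_congr ?_ ?_ <;>
      simp only [htSat_hconj_iff, mSat_mconj_iff, List.forall_mem_map]
    · exact forall₂_congr fun b _ => htSat_trB_iff hH hk b
    · exact forall₂_congr fun b _ => htSat_hneg_trB_iff hH hT hk b

theorem htSat_stdHead_iff (hH : EncodesTrace lam Hs Hf) (hT : EncodesTrace lam Ts Tf)
    (hk : k < lam) (hp hn : List α) :
    HTSat Hs Ts (hdisj (hp.map (fun a => HTForm.atom (Sum.inl (a, k))) ++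
        hn.map (fun a => hneg (HTForm.atom (Sum.inl (a, k)))))) ↔
      MSat lam Hf Tf τ k (mdisj (hp.map MForm.atom ++ hn.map (fun a => mneg (MForm.atom a)))) := by
  simp [htSat_hdisj_iff, mSat_mdisj_iff, or_and_right, exists_or, HTSat, MSat, hneg, mneg,
    hH _ k hk, hT _ k hk]

theorem htSat_nextHead_iff (hH : EncodesTrace lam Hs Hf) (hk : k < lam) (a : α) :
    HTSat Hs Ts (if k = lam - 1 then .bot else .atom (Sum.inl (a, k + 1))) ↔
      MSat lam Hf Tf τ k (.next 0 none (.atom a)) := by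
  by_cases hlast : k = lam - 1
  · simp [hlast, HTSat, MSat]
    omega
  · have hk1 : k + 1 < lam := by omega
    simp [hlast, HTSat, MSat, hk1, inI_zero_none, hH a (k + 1) hk1]

theorem htSat_trRule_iff (hH : EncodesTrace lam Hs Hf) (hT : EncodesTrace lam Ts Tf)
    (hk : k < lam) (r : MRule α) :
    HTSat Hs Ts (trRule Sum.inl lam k r) ↔ MSat lam Hf Tf τ k r.untimed.toMForm := by
  cases r with
  | std hp hn bp bn =>
    exact and_congr
      (imp_congr (htSat_trBody_iff hH hT hk _) (htSat_stdHead_iff hH hT hk hp hn))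
      (imp_congr (htSat_trBody_iff hT hT hk _) (htSat_stdHead_iff hT hT hk hp hn))
  | nxt m n a bp bn =>
    exact and_congr
      (imp_congr (htSat_trBody_iff hH hT hk _) (htSat_nextHead_iff hH hk a))
      (imp_congr (htSat_trBody_iff hT hT hk _) (htSat_nextHead_iff hT hk a))

end Translation

section Timing

variable {α : Type} {lam ν : ℕ} {S : Set (TAtom α)}

open Classical in
/-- Follows the timing atoms `t_{k,d} = Sum.inr (k, d)` of `S` from `t_{0,0}` along the rules of
`Δ_{λ,ν}`; the fallback value `0` is never reached in a model of `Δ_{λ,ν}`. -/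
noncomputable def timingChain (S : Set (TAtom α)) (ν : ℕ) : ℕ → ℕ
  | 0 => 0
  | k + 1 =>
    if h : ∃ d, Sum.inr (k + 1, d) ∈ S ∧ timingChain S ν k < d ∧ d ≤ ν then h.choose else 0

theorem timingChain_succ_spec {k : ℕ}
    (h : ∃ d, Sum.inr (k + 1, d) ∈ S ∧ timingChain S ν k < d ∧ d ≤ ν) :
    Sum.inr (k + 1, timingChain S ν (k + 1)) ∈ S ∧
      timingChain S ν k < timingChain S ν (k + 1) ∧ timingChain S ν (k + 1) ≤ ν := by
  rw [timingChain, dif_pos h]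
  exact h.choose_spec

theorem exists_succ_of_htModel_deltaB (hDelta : HTModel S S (DeltaB Sum.inr lam ν)) {k d : ℕ}
    (hk : k + 1 < lam) (hd : d ≤ ν) (hmem : Sum.inr (k, d) ∈ S) :
    ∃ d', Sum.inr (k + 1, d') ∈ S ∧ d < d' ∧ d' ≤ ν := by
  have hsucc := (hDelta _ (Or.inr ⟨k, d, hk, hd, rfl⟩)).1 hmem
  simp only [htSat_hdisj_iff, List.mem_map, List.mem_filter, List.mem_range,
    decide_eq_true_eq] at hsucc
  obtain ⟨_, ⟨d', ⟨hd', hdd'⟩, rfl⟩, hmem'⟩ := hsucc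
  exact ⟨d', hmem', hdd', by omega⟩

theorem timingChain_mem (hDelta : HTModel S S (DeltaB Sum.inr lam ν)) :
    ∀ k, k < lam → Sum.inr (k, timingChain S ν k) ∈ S ∧ timingChain S ν k ≤ ν
  | 0, _ => ⟨hDelta _ (Or.inl rfl), Nat.zero_le ν⟩
  | k + 1, hk =>
    have ih := timingChain_mem hDelta k (by omega)
    have h := timingChain_succ_spec (exists_succ_of_htModel_deltaB hDelta hk ih.2 ih.1)
    ⟨h.1, h.2.2⟩

theorem timingFn_timingChain (hDelta : HTModel S S (DeltaB Sum.inr lam ν)) :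
    TimingFn lam (timingChain S ν) :=
  ⟨rfl, fun k hk =>
    have h := timingChain_mem hDelta k (by omega)
    (timingChain_succ_spec (exists_succ_of_htModel_deltaB hDelta hk h.2 h.1)).2.1⟩

end Timing

section Equilibrium

variable {α : Type} {lam ν : ℕ} {P : Set (MRule α)} {S : Set (TAtom α)} {F : ℕ → Set α}
  {τ : ℕ → ℕ}

theorem sum_inr_mem_thetaTot_iff {k d : ℕ} :
    Sum.inr (k, d) ∈ thetaTot lam F τ ↔ k < lam ∧ τ k = d := by
  simp [thetaTot, eq_comm]

theorem thetaTot_subset (hF : ∀ k < lam, F k ⊆ traceOf S k)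
    (hτ : ∀ k < lam, Sum.inr (k, τ k) ∈ S) : thetaTot lam F τ ⊆ S := by
  rintro _ (⟨a, k, hk, ha, rfl⟩ | ⟨k, hk, rfl⟩)
  · exact hF k hk ha
  · exact hτ k hk

theorem htModel_piT_thetaTot
    (hP : ∀ r ∈ P, ∀ k < lam, MSat lam F (traceOf S) τ k r.untimed.toMForm) :
    HTModel (thetaTot lam F τ) S (PiT Sum.inl lam P) := by
  rintro _ ⟨r, hr, k, hk, rfl⟩
  exact (htSat_trRule_iff (encodesTrace_thetaTot F τ) (encodesTrace_traceOf S) hk r).2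
    (hP r hr k hk)

theorem htModel_deltaB_thetaTot (hlam : 0 < lam) (hτ : TimingFn lam τ)
    (hν : ∀ k < lam, τ k ≤ ν) (hDelta : HTModel S S (DeltaB Sum.inr lam ν)) :
    HTModel (thetaTot lam F τ) S (DeltaB Sum.inr lam ν) := by
  rintro _ (rfl | ⟨k, d, hk, hd, rfl⟩)
  · exact sum_inr_mem_thetaTot_iff.2 ⟨hlam, hτ.1⟩
  refine ⟨fun hmem => ?_, (hDelta _ (Or.inr ⟨k, d, hk, hd, rfl⟩)).2⟩
  obtain ⟨-, rfl⟩ := sum_inr_mem_thetaTot_iff.1 hmem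
  rw [htSat_hdisj_iff]
  refine ⟨.atom (Sum.inr (k + 1, τ (k + 1))), ?_, sum_inr_mem_thetaTot_iff.2 ⟨hk, rfl⟩⟩
  simp only [List.mem_map, List.mem_filter, List.mem_range, decide_eq_true_eq]
  exact ⟨τ (k + 1), ⟨Nat.lt_succ_of_le (hν _ hk), hτ.2 k hk⟩, rfl⟩

theorem htModel_psiB_of_subset {H T : Set (TAtom α)} (hHT : H ⊆ T)
    (hPsi : HTModel T T (PsiB lam ν P)) : HTModel H T (PsiB lam ν P) := by
  intro φ hφ
  obtain ⟨_, _, _, _, _, _, _, _, _, _, _, _, rfl, _⟩ := id hφ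
  exact htSat_hneg_of_total hHT (hPsi _ hφ)

theorem thetaTot_eq_of_eqModel
    (he : EqModel S (PiT Sum.inl lam P ∪ DeltaB Sum.inr lam ν ∪ PsiB lam ν P))
    (hlam : 0 < lam) (hτ : TimingFn lam τ)
    (hchain : ∀ k < lam, Sum.inr (k, τ k) ∈ S ∧ τ k ≤ ν) (hF : ∀ k < lam, F k ⊆ traceOf S k)
    (hP : ∀ r ∈ P, ∀ k < lam, MSat lam F (traceOf S) τ k r.untimed.toMForm) :
    thetaTot lam F τ = S := by
  obtain ⟨⟨-, hDelta⟩, hPsi⟩ := (htModel_union_iff.1 he.1).imp_left htModel_union_iff.1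
  have hsub := thetaTot_subset hF fun k hk => (hchain k hk).1
  refine he.2 _ hsub (htModel_union_iff.2 ⟨htModel_union_iff.2 ⟨?_, ?_⟩, ?_⟩)
  · exact htModel_piT_thetaTot hP
  · exact htModel_deltaB_thetaTot hlam hτ (fun k hk => (hchain k hk).2) hDelta
  · exact htModel_psiB_of_subset hsub hPsi

theorem inI_of_htModel_psiB (hPsi : HTModel S S (PsiB lam ν P)) {m : ℕ} {n : Option ℕ} {a : α}
    {bp bn : List (BAtom α)} (hr : MRule.nxt m n a bp bn ∈ P) {k d d' : ℕ} (hk : k + 1 < lam)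
    (hdd' : d < d') (hd' : d' ≤ ν) (hd_mem : Sum.inr (k, d) ∈ S)
    (hd'_mem : Sum.inr (k + 1, d') ∈ S)
    (hbody : HTSat S S (trBody Sum.inl lam k (.nxt m n a bp bn))) :
    inI m n (d' - d) := by
  by_contra hI
  exact (hPsi _ ⟨m, n, a, bp, bn, hr, k, d, d', hk, hdd', hd', rfl, not_inI_iff.1 hI⟩).1
    ⟨hbody, hd_mem, hd'_mem⟩

theorem mhtModelP_traceOf (hPi : HTModel S S (PiT Sum.inl lam P))
    (hPsi : HTModel S S (PsiB lam ν P)) (hτ : TimingFn lam τ)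
    (hchain : ∀ k < lam, Sum.inr (k, τ k) ∈ S ∧ τ k ≤ ν) :
    MHTModelP lam (traceOf S) (traceOf S) τ P := by
  intro r hr k hk
  have hS : EncodesTrace lam S (traceOf S) := encodesTrace_traceOf S
  have hu := (htSat_trRule_iff (τ := τ) hS hS hk r).1 (hPi _ ⟨r, hr, k, hk, rfl⟩)
  cases r with
  | std => exact hu
  | nxt m n a bp bn =>
    refine hu.of_untimed_of_inI fun hbody => ?_
    have hk1 : k + 1 < lam := (hu.1 hbody).1
    exact inI_of_htModel_psiB hPsi hr hk1 (hτ.2 k hk1) (hchain _ hk1).2 (hchain k hk).1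
      (hchain _ hk1).1 ((htSat_trBody_iff hS hS hk _).2 hbody)

end Equilibrium

/-- Theorem 2 (Correctness of the Boolean translation). -/
theorem boolean_translation_correct {α : Type} (lam ν : ℕ) (P : Set (MRule α))
    (Tstar : Set (TAtom α))
    (he : EqModel Tstar (PiT Sum.inl lam P ∪ DeltaB Sum.inr lam ν ∪ PsiB lam ν P)) :
    ∃ τ : ℕ → ℕ, TimingFn lam τ ∧
      (∀ k, k < lam → ∀ d, (Sum.inr (k, d) ∈ Tstar ↔ τ k = d)) ∧
      MetricEq lam (fun k => {a | Sum.inl (a, k) ∈ Tstar}) τ P := by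
  rcases Nat.eq_zero_or_pos lam with rfl | hlam
  · exact ⟨0, ⟨rfl, by omega⟩, by omega, fun _ _ _ hk => absurd hk (by omega),
      fun _ _ _ _ hk => absurd hk (by omega)⟩
  obtain ⟨⟨hPi, hDelta⟩, hPsi⟩ := (htModel_union_iff.1 he.1).imp_left htModel_union_iff.1
  set τ := timingChain Tstar ν
  have hτ : TimingFn lam τ := timingFn_timingChain hDelta
  have hchain := timingChain_mem hDelta
  have hfix (F : ℕ → Set α) (hF : ∀ k < lam, F k ⊆ traceOf Tstar k)
      (hP : ∀ r ∈ P, ∀ k < lam, MSat lam F (traceOf Tstar) τ k r.untimed.toMForm) :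
      thetaTot lam F τ = Tstar :=
    thetaTot_eq_of_eqModel he hlam hτ hchain hF hP
  have hS : EncodesTrace lam Tstar (traceOf Tstar) := encodesTrace_traceOf Tstar
  have hT : thetaTot lam (traceOf Tstar) τ = Tstar := hfix _ (fun _ _ => subset_rfl)
    fun r hr k hk => (htSat_trRule_iff hS hS hk r).1 (hPi _ ⟨r, hr, k, hk, rfl⟩)
  refine ⟨τ, hτ, fun k hk d => ?_, mhtModelP_traceOf hPi hPsi hτ hchain, fun H hH hHP k hk => ?_⟩
  · rw [← hT, sum_inr_mem_thetaTot_iff]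
    exact and_iff_right hk
  · have hH := hfix H (fun k _ => hH k) fun r hr k hk => (hHP r hr k hk).untimed
    ext a
    rw [← encodesTrace_thetaTot (lam := lam) H τ a k hk, hH]
    rfl
end
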